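/- Suppose ψ(·,ξ) is smooth in y with |∂_y^γ ψ(y,ξ)| ≤ C_γ⟨ξ⟩ for all |γ| ≥ 1, and |∇_yψ(y,ξ) − ∇ₓψ(x,ξ)| ≤ C₀|y − x|·⟨ξ⟩ (Lipschitz gradient with constant C₀⟨ξ⟩). Let Ψ(x,y,ξ) = ψ(y,ξ) − ψ(x,ξ) + (x−y)·∇ₓψ(x,ξ). Then for every multi-index γ there is C_γ such that |∂_y^γ e^{iΨ(x,y,ξ)}| ≤ C_γ (1 + |y − x|⟨ξ⟩)^{|γ|} ⟨ξ⟩^{|γ|/2} for all x, y, ξ. In particular, |∂_y^γ e^{iΨ(x,y,ξ)}|_{y=x}| ≤ C_γ⟨ξ⟩^{|γ|/2}. -/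

import Mathlib

open scoped RealInnerProductSpace

/-- Japanese bracket: ⟨x⟩ = (1 + |x|²)^{1/2}. -/
noncomputable def jb {n : ℕ} (x : EuclideanSpace ℝ (Fin n)) : ℝ :=
  Real.sqrt (1 + ‖x‖ ^ 2)

section Aux

/-- All iterated derivatives of `t ↦ exp(I t)` on `ℝ`. -/
lemma cexp_I_iteratedDeriv (i : ℕ) :
    iteratedDeriv i (fun t : ℝ => Complex.exp (Complex.I * t)) =
      fun t : ℝ => Complex.I ^ i * Complex.exp (Complex.I * t) := by
  induction i with
  | zero => simp [iteratedDeriv_zero]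
  | succ i ih =>
    rw [iteratedDeriv_succ, ih]
    funext t
    have h1 : HasDerivAt (fun t : ℝ => (Complex.I * t : ℂ)) Complex.I t := by
      simpa using ((hasDerivAt_id t).ofReal_comp.const_mul Complex.I)
    have h : HasDerivAt (fun t : ℝ => Complex.exp (Complex.I * t))
        (Complex.exp (Complex.I * t) * Complex.I) t := h1.cexp
    have h2 := (h.const_mul (Complex.I ^ i)).deriv
    rw [h2]; ring

lemma cexp_I_norm_iteratedFDeriv (i : ℕ) (t : ℝ) :
    ‖iteratedFDeriv ℝ i (fun t : ℝ => Complex.exp (Complex.I * t)) t‖ = 1 := by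
  rw [norm_iteratedFDeriv_eq_norm_iteratedDeriv, cexp_I_iteratedDeriv]
  simp [Complex.norm_exp]

lemma cexp_I_contDiff : ContDiff ℝ (⊤ : ℕ∞) (fun t : ℝ => Complex.exp (Complex.I * t)) :=
  Complex.contDiff_exp.comp (contDiff_const.mul Complex.ofRealCLM.contDiff)

variable {E : Type*} [NormedAddCommGroup E] [InnerProductSpace ℝ E] [CompleteSpace E]

lemma fderiv_eq_innerSL_gradient (f : E → ℝ) (z : E) :
    fderiv ℝ f z = innerSL ℝ (gradient f z) := by
  rw [gradient]
  ext u
  rw [innerSL_apply_apply, ← InnerProductSpace.toDual_apply_apply,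
    (InnerProductSpace.toDual ℝ E).apply_symm_apply]

lemma norm_fderiv_sub_innerSL (f : E → ℝ) (z : E) (w : E) :
    ‖fderiv ℝ f z - innerSL ℝ w‖ = ‖gradient f z - w‖ := by
  have h : fderiv ℝ f z - innerSL ℝ w = innerSL ℝ (gradient f z - w) := by
    rw [fderiv_eq_innerSL_gradient]; ext u
    simp [inner_sub_left]
  rw [h, innerSL_apply_norm]

lemma Psi_contDiff (f : E → ℝ) (hf : ContDiff ℝ (⊤ : ℕ∞) f) (c : ℝ) (x v : E) :
    ContDiff ℝ (⊤ : ℕ∞) (fun y' => f y' - c + ⟪x - y', v⟫) :=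
  (hf.sub contDiff_const).add ((contDiff_const.sub contDiff_id).inner ℝ contDiff_const)

lemma Psi_fderiv (f : E → ℝ) (hf : ContDiff ℝ (⊤ : ℕ∞) f) (c : ℝ) (x v : E) (z : E) :
    fderiv ℝ (fun y' => f y' - c + ⟪x - y', v⟫) z = fderiv ℝ f z - innerSL ℝ v := by
  have hform : (fun y' : E => f y' - c + ⟪x - y', v⟫)
      = fun y' => (f y' - c) + (⟪x, v⟫ - innerSL ℝ v y') := by
    funext y'
    rw [innerSL_apply_apply, inner_sub_left, real_inner_comm v y']
  have hd : HasFDerivAt (fun y' : E => f y' - c + ⟪x - y', v⟫)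
      (fderiv ℝ f z - innerSL ℝ v) z := by
    rw [hform, sub_eq_add_neg (fderiv ℝ f z)]
    exact ((hf.differentiable (by simp) z).hasFDerivAt.sub_const c).add
      ((innerSL ℝ v).hasFDerivAt.const_sub ⟪x, v⟫)
  exact hd.fderiv

lemma Psi_iteratedFDeriv_one (f : E → ℝ) (hf : ContDiff ℝ (⊤ : ℕ∞) f) (c : ℝ) (x v : E) (z : E) :
    ‖iteratedFDeriv ℝ 1 (fun y' => f y' - c + ⟪x - y', v⟫) z‖ = ‖gradient f z - v‖ := by
  rw [show (1 : ℕ) = 0 + 1 from rfl, ← norm_iteratedFDeriv_fderiv, norm_iteratedFDeriv_zero,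
    Psi_fderiv f hf c x v z, norm_fderiv_sub_innerSL]

lemma Psi_iteratedFDeriv_succ (f : E → ℝ) (hf : ContDiff ℝ (⊤ : ℕ∞) f) (c : ℝ) (x v : E)
    (k : ℕ) (hk : k ≠ 0) (z : E) :
    ‖iteratedFDeriv ℝ (k + 1) (fun y' => f y' - c + ⟪x - y', v⟫) z‖
      = ‖iteratedFDeriv ℝ (k + 1) f z‖ := by
  rw [← norm_iteratedFDeriv_fderiv, ← norm_iteratedFDeriv_fderiv (f := f)]
  have h1 : (fderiv ℝ fun y' => f y' - c + ⟪x - y', v⟫)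
      = fderiv ℝ f + fun _ => -(innerSL ℝ v) := by
    funext z; rw [Psi_fderiv f hf c x v z, sub_eq_add_neg]; rfl
  rw [h1]
  have h2 : ContDiff ℝ (k : ℕ∞) (fderiv ℝ f) := hf.fderiv_right (by exact_mod_cast le_top)
  rw [iteratedFDeriv_add_apply h2.contDiffAt contDiff_const.contDiffAt, iteratedFDeriv_const_of_ne hk]
  simp

end Aux

set_option maxHeartbeats 2000000 in
/-- If all y-derivatives of order ≥ 1 of ψ(·,ξ) are O(⟨ξ⟩) and ∇ψ(·,ξ) is C₀⟨ξ⟩-Lipschitz,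
    then for Ψ(x,y,ξ) = ψ(y,ξ) − ψ(x,ξ) + (x−y)·∇ₓψ(x,ξ) and every order γ,
    ‖∂_y^γ e^{iΨ(x,y,ξ)}‖ ≤ C_γ(1 + |y−x|⟨ξ⟩)^γ ⟨ξ⟩^{γ/2}; in particular
    ‖∂_y^γ e^{iΨ}|_{y=x}‖ ≤ C_γ⟨ξ⟩^{γ/2}. -/
theorem exp_iPsi_derivative_bounds (n : ℕ)
    (ψ : EuclideanSpace ℝ (Fin n) → EuclideanSpace ℝ (Fin n) → ℝ)
    (hψ_smooth : ∀ ξ, ContDiff ℝ (⊤ : ℕ∞) (fun y => ψ y ξ))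
    (Cd : ℕ → ℝ)
    (hder : ∀ k : ℕ, 1 ≤ k → ∀ y ξ : EuclideanSpace ℝ (Fin n),
      ‖iteratedFDeriv ℝ k (fun y' => ψ y' ξ) y‖ ≤ Cd k * jb ξ)
    (C₀ : ℝ)
    (hLip : ∀ x y ξ : EuclideanSpace ℝ (Fin n),
      ‖gradient (fun y' => ψ y' ξ) y - gradient (fun x' => ψ x' ξ) x‖ ≤ C₀ * ‖y - x‖ * jb ξ) :
    ∀ γ : ℕ, ∃ C : ℝ, ∀ x y ξ : EuclideanSpace ℝ (Fin n),
      (‖iteratedFDeriv ℝ γ (fun y' => Complex.exp (Complex.I *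
          (ψ y' ξ - ψ x ξ + ⟪x - y', gradient (fun x' => ψ x' ξ) x⟫ : ℝ))) y‖
        ≤ C * (1 + ‖y - x‖ * jb ξ) ^ γ * jb ξ ^ ((γ : ℝ) / 2)) ∧
      (‖iteratedFDeriv ℝ γ (fun y' => Complex.exp (Complex.I *
          (ψ y' ξ - ψ x ξ + ⟪x - y', gradient (fun x' => ψ x' ξ) x⟫ : ℝ))) x‖
        ≤ C * jb ξ ^ ((γ : ℝ) / 2)) := by
  intro γ
  set A : ℝ := 1 + |C₀| + ∑ i ∈ Finset.range (γ + 1), |Cd i| with hA_def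
  have hsum0 : (0:ℝ) ≤ ∑ i ∈ Finset.range (γ + 1), |Cd i| :=
    Finset.sum_nonneg fun i _ => abs_nonneg _
  have hA1 : (1:ℝ) ≤ A := by
    have := abs_nonneg C₀; rw [hA_def]; linarith
  have hAC₀ : C₀ ≤ A := by
    have h1 := le_abs_self C₀; rw [hA_def]; linarith
  have hACd : ∀ i ≤ γ, Cd i ≤ A := by
    intro i hi
    have h1 : |Cd i| ≤ ∑ j ∈ Finset.range (γ + 1), |Cd j| :=
      Finset.single_le_sum (fun j _ => abs_nonneg (Cd j))
        (Finset.mem_range.mpr (Nat.lt_succ_of_le hi))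
    have h2 := le_abs_self (Cd i)
    have := abs_nonneg C₀
    rw [hA_def]; linarith
  refine ⟨(γ.factorial : ℝ) * A ^ γ, ?_⟩
  have key : ∀ x y ξ : EuclideanSpace ℝ (Fin n),
      ‖iteratedFDeriv ℝ γ (fun y' => Complex.exp (Complex.I *
          (ψ y' ξ - ψ x ξ + ⟪x - y', gradient (fun x' => ψ x' ξ) x⟫ : ℝ))) y‖
        ≤ (γ.factorial : ℝ) * A ^ γ * (1 + ‖y - x‖ * jb ξ) ^ γ * jb ξ ^ ((γ : ℝ) / 2) := by
    intro x y ξ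
    set v : EuclideanSpace ℝ (Fin n) := gradient (fun x' => ψ x' ξ) x with hv
    set f : EuclideanSpace ℝ (Fin n) → ℝ := fun y' => ψ y' ξ with hf
    set Ψ : EuclideanSpace ℝ (Fin n) → ℝ := fun y' => f y' - ψ x ξ + ⟪x - y', v⟫ with hΨdef
    have hjb0 : (0:ℝ) ≤ jb ξ := Real.sqrt_nonneg _
    have hjb1 : (1:ℝ) ≤ jb ξ := by
      rw [jb]
      nlinarith [Real.sq_sqrt (show (0:ℝ) ≤ 1 + ‖ξ‖ ^ 2 by positivity),
        Real.sqrt_nonneg (1 + ‖ξ‖ ^ 2), sq_nonneg ‖ξ‖]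
    set s : ℝ := Real.sqrt (jb ξ) with hs
    set r : ℝ := ‖y - x‖ * jb ξ with hr
    have hs1 : (1:ℝ) ≤ s := by
      rw [hs]
      nlinarith [Real.sq_sqrt hjb0, Real.sqrt_nonneg (jb ξ)]
    have hs2 : s * s = jb ξ := Real.mul_self_sqrt hjb0
    have hr0 : (0:ℝ) ≤ r := mul_nonneg (norm_nonneg _) hjb0
    set D : ℝ := A * ((1 + r) * s) with hD_def
    have hs0 : (0:ℝ) ≤ s := by linarith
    have hA0 : (0:ℝ) ≤ A := by linarith
    have h1rs : (1:ℝ) ≤ (1 + r) * s := by nlinarith [mul_nonneg hr0 hs0]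
    have hD1 : (1:ℝ) ≤ D := by
      rw [hD_def]
      nlinarith [mul_nonneg (sub_nonneg.2 hA1) (sub_nonneg.2 h1rs)]
    have hsγ : s ^ γ = jb ξ ^ ((γ : ℝ) / 2) := by
      rw [hs, Real.sqrt_eq_rpow, ← Real.rpow_natCast (jb ξ ^ ((1:ℝ)/2)) γ,
        ← Real.rpow_mul hjb0, show (1:ℝ)/2 * (γ:ℝ) = (γ:ℝ)/2 by ring]
    have hcomp : (fun y' => Complex.exp (Complex.I *
        (ψ y' ξ - ψ x ξ + ⟪x - y', gradient (fun x' => ψ x' ξ) x⟫ : ℝ)))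
        = (fun t : ℝ => Complex.exp (Complex.I * t)) ∘ Ψ := rfl
    rw [hcomp]
    have hΨ : ContDiff ℝ (⊤ : ℕ∞) Ψ := Psi_contDiff f (hψ_smooth ξ) _ x v
    have hbound := norm_iteratedFDeriv_comp_le (𝕜 := ℝ) (n := γ) cexp_I_contDiff hΨ (by exact_mod_cast le_top) y
      (C := 1) (D := D) (fun i _ => le_of_eq (cexp_I_norm_iteratedFDeriv i (Ψ y)))
      (fun i h1i hiγ => by
        rcases i with _ | i
        · omega
        rcases i with _ | k
        · -- first derivative
          rw [Psi_iteratedFDeriv_one f (hψ_smooth ξ) _ x v y]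
          have hl := hLip x y ξ
          calc ‖gradient f y - v‖ ≤ C₀ * ‖y - x‖ * jb ξ := hl
            _ = C₀ * r := by rw [hr]; ring
            _ ≤ D ^ 1 := by
              rw [pow_one, hD_def]
              nlinarith [mul_le_mul_of_nonneg_right hAC₀ hr0,
                mul_nonneg (mul_nonneg hA0 (by linarith : (0:ℝ) ≤ 1 + r))
                  (by linarith : (0:ℝ) ≤ s - 1)]
        · -- higher derivatives
          rw [show k + 1 + 1 = (k + 1) + 1 from rfl,
            Psi_iteratedFDeriv_succ f (hψ_smooth ξ) _ x v (k + 1) (Nat.succ_ne_zero k) y]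
          have h := hder (k + 2) (by omega) y ξ
          have hCd : Cd (k + 2) ≤ A := hACd (k + 2) (by omega)
          calc ‖iteratedFDeriv ℝ (k + 1 + 1) f y‖ ≤ Cd (k + 2) * jb ξ := h
            _ ≤ A * (s * s) := by
              rw [hs2]
              exact mul_le_mul_of_nonneg_right hCd hjb0
            _ ≤ D ^ 2 := by
              have hAA : A ≤ A * A * ((1 + r) * (1 + r)) := by
                have h1 : A ≤ A * A := le_mul_of_one_le_left hA0 hA1
                have h2 : (1:ℝ) ≤ (1 + r) * (1 + r) := by nlinarith [mul_nonneg hr0 hr0]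
                have h3 : A * A ≤ A * A * ((1 + r) * (1 + r)) :=
                  le_mul_of_one_le_right (mul_nonneg hA0 hA0) h2
                linarith
              have hss : (0:ℝ) ≤ s * s := mul_nonneg hs0 hs0
              calc A * (s * s) ≤ A * A * ((1 + r) * (1 + r)) * (s * s) :=
                    mul_le_mul_of_nonneg_right hAA hss
                _ = D ^ 2 := by rw [hD_def]; ring
            _ ≤ D ^ (k + 1 + 1) := pow_le_pow_right₀ hD1 (by omega))
    calc ‖iteratedFDeriv ℝ γ ((fun t : ℝ => Complex.exp (Complex.I * t)) ∘ Ψ) y‖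
        ≤ (γ.factorial : ℝ) * 1 * D ^ γ := hbound
      _ = (γ.factorial : ℝ) * A ^ γ * (1 + r) ^ γ * jb ξ ^ ((γ : ℝ) / 2) := by
          rw [hD_def, mul_pow, mul_pow, ← hsγ]; ring
  intro x y ξ
  refine ⟨key x y ξ, ?_⟩
  have h := key x x ξ
  simpa using h
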